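/- arXiv:1603.04451 — 5 statements merged into one kernel-verified Lean document; each statement's English description precedes it below -/
import Mathlib

section
/- If the quadratic cost matrix Q of the QMST on a graph G is row graded (each row nondecreasing: q(i,1) ≤ q(i,2) ≤ ... ≤ q(i,m)), and if the lexicographically smallest spanning tree T⁰ (with respect to edge indices) is a minimum spanning tree of G with respect to the linear edge costs z_i := Σ_{e_j ∈ T⁰} q(i,j), then T⁰ minimizes the quadratic objective z(T) = Σ_{e_i∈T} Σ_{e_j∈T} q(i,j) over all spanning trees T of G. -/
/-!
Spanning trees are the bases of the graphic matroid, and in a matroid on a linearly ordered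
ground set the lexicographically smallest base `B₀` is Gale-minimal: its `k`-th smallest element
is at most the `k`-th smallest element of any base `B`. Otherwise augment the first `k` elements
of `B₀` by one of the first `k + 1` elements of `B` and complete with elements of `B₀`; the new
element is then the first difference with `B₀`, so this base is lexicographically smaller.
As every row of `Q` is monotone, Gale-minimality gives `∑_{j ∈ T⁰} q(i,j) ≤ ∑_{j ∈ T} q(i,j)`
for each `i`, and summing over `i ∈ T` after the minimum spanning tree inequality proves the claim.
-/

/-- A spanning tree of the multigraph on vertex set `V` with edges `e_1,…,e_m` given by
`ends : Fin m → Sym2 V`. -/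
def IsSpanningTree {V : Type*} [Fintype V] {m : ℕ} (ends : Fin m → Sym2 V)
    (T : Finset (Fin m)) : Prop :=
  T.card + 1 = Fintype.card V ∧
    ∀ u v : V, Relation.ReflTransGen (fun a b => ∃ e ∈ T, ends e = s(a, b)) u v

open Finset Relation

theorem Finset.lex_sort_of_mem_of_notMem {α : Type*} [LinearOrder α] {s t : Finset α} {c d : α}
    (hcs : c ∈ s) (hct : c ∉ t) (hdt : d ∈ t) (hcd : c < d)
    (hagree : ∀ x < c, x ∈ s ↔ x ∈ t) :
    List.Lex (· < ·) (s.sort (· ≤ ·)) (t.sort (· ≤ ·)) := by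
  induction s using Finset.induction_on_min generalizing t with
  | empty => simp at hcs
  | insert a s hmin ih =>
    have has : a ∉ s := fun h => (hmin a h).false
    have hac : a ≤ c := by
      rcases mem_insert.1 hcs with rfl | h
      exacts [le_rfl, (hmin c h).le]
    have ha_le : ∀ x ∈ t, a ≤ x := by
      refine fun x hx => le_of_not_gt fun hxa => ?_
      rcases mem_insert.1 ((hagree x (hxa.trans_le hac)).2 hx) with rfl | h
      exacts [lt_irrefl _ hxa, lt_asymm hxa (hmin x h)]
    rw [sort_insert _ (fun x hx => (hmin x hx).le) has]
    rcases eq_or_lt_of_le hac with rfl | hac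
    · obtain ⟨b, l, hl⟩ : ∃ b l, t.sort (· ≤ ·) = b :: l :=
        List.exists_cons_of_ne_nil fun h => by simpa [h] using mem_sort (· ≤ ·) |>.2 hdt
      have hbt : b ∈ t := mem_sort _ |>.1 (hl ▸ List.mem_cons_self)
      exact hl ▸ List.Lex.rel ((ha_le b hbt).lt_of_ne (ne_of_mem_of_not_mem hbt hct).symm)
    · have hat_mem : a ∈ t := (hagree a hac).1 (mem_insert_self a s)
      rw [← insert_erase hat_mem, sort_insert _ (fun x hx => ha_le x (mem_of_mem_erase hx))
        (notMem_erase a t)]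
      refine List.Lex.cons (ih ((mem_insert.1 hcs).resolve_left hac.ne')
        (fun h => hct (mem_of_mem_erase h)) (mem_erase.2 ⟨(hac.trans hcd).ne', hdt⟩)
        fun x hx => ?_)
      rw [mem_erase, ← hagree x hx, mem_insert]
      constructor
      · exact fun h => ⟨fun hxa => has (hxa ▸ h), Or.inr h⟩
      · rintro ⟨hxa, h | h⟩
        exacts [absurd h hxa, h]

theorem Finset.sum_le_sum_of_orderEmbOfFin_le {α M : Type*} [LinearOrder α] [AddCommMonoid M]
    [PartialOrder M] [IsOrderedAddMonoid M] {f : α → M} {s t : Finset α} {n : ℕ}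
    (hs : s.card = n) (ht : t.card = n)
    (h : ∀ k, f (s.orderEmbOfFin hs k) ≤ f (t.orderEmbOfFin ht k)) :
    ∑ x ∈ s, f x ≤ ∑ x ∈ t, f x := by
  rw [← map_orderEmbOfFin_univ s hs, ← map_orderEmbOfFin_univ t ht, sum_map, sum_map]
  exact sum_le_sum fun k _ => h k

theorem Matroid.IsBase.orderEmbOfFin_le_of_lex_min {α : Type*} [LinearOrder α] {M : Matroid α}
    {B₀ B : Finset α} {n : ℕ} (hB₀ : M.IsBase B₀) (hB : M.IsBase B)
    (hmin : ∀ B' : Finset α, M.IsBase B' →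
      B' = B₀ ∨ List.Lex (· < ·) (B₀.sort (· ≤ ·)) (B'.sort (· ≤ ·)))
    (h₀ : B₀.card = n) (h : B.card = n) (k : Fin n) :
    B₀.orderEmbOfFin h₀ k ≤ B.orderEmbOfFin h k := by
  set f₀ := B₀.orderEmbOfFin h₀
  set f := B.orderEmbOfFin h
  by_contra! hk
  set A := (Iio k).map f₀.toEmbedding
  have hAB₀ : A ⊆ B₀ := fun x hx => by
    obtain ⟨j, -, rfl⟩ := mem_map.1 hx
    exact orderEmbOfFin_mem B₀ h₀ j
  have hA : M.Indep A := hB₀.indep.subset (coe_subset.2 hAB₀)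
  have hB' : M.Indep ((Iic k).map f.toEmbedding) := hB.indep.subset <| coe_subset.2 fun x hx => by
    obtain ⟨j, -, rfl⟩ := mem_map.1 hx
    exact orderEmbOfFin_mem B h j
  obtain ⟨b, hbB', hbA, hbind⟩ := hA.augment_finset hB' (by simp [A])
  have hbk : b < f₀ k := by
    obtain ⟨j, hj, rfl⟩ := mem_map.1 hbB'
    exact (f.monotone (mem_Iic.1 hj)).trans_lt hk
  have hmemA : ∀ x ∈ B₀, x < f₀ k → x ∈ A := by
    intro x hx hxk
    obtain ⟨j, rfl⟩ : x ∈ Set.range f₀ := by rw [range_orderEmbOfFin]; exact hx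
    exact mem_map_of_mem _ (mem_Iio.2 (f₀.lt_iff_lt.1 hxk))
  have hbB₀ : b ∉ B₀ := fun hb => hbA (hmemA b hb hbk)
  obtain ⟨T, hT, hbAT, hTsub⟩ := hbind.exists_isBase_subset_union_isBase hB₀
  have hTfin : T.Finite := (insert b A ∪ B₀).finite_toSet.subset (by rwa [coe_union, coe_insert])
  obtain ⟨T, rfl⟩ := hTfin.exists_finset_coe
  have hbT : b ∈ T := by simpa using hbAT (Set.mem_insert b _)
  have hlt : List.Lex (· < ·) (T.sort (· ≤ ·)) (B₀.sort (· ≤ ·)) := by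
    refine lex_sort_of_mem_of_notMem hbT hbB₀ (orderEmbOfFin_mem B₀ h₀ k) hbk fun x hxb => ?_
    constructor
    · intro hx
      rcases hTsub hx with (rfl | hx) | hx
      exacts [absurd hxb (lt_irrefl x), hAB₀ hx, hx]
    · exact fun hx => by simpa using hbAT (Set.mem_insert_of_mem _ (hmemA x hx (hxb.trans hbk)))
  rcases hmin T hT with rfl | hgt
  · exact hbB₀ hbT
  · exact asymm hgt hlt

section EdgeFamily

variable {V ι : Type*} {ends : ι → Sym2 V}

variable (ends) in
def EdgeAdj (S : Finset ι) (a b : V) : Prop := ∃ e ∈ S, ends e = s(a, b)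

instance (S : Finset ι) : Std.Symm (EdgeAdj ends S) :=
  ⟨fun _ _ ⟨e, he, h⟩ => ⟨e, he, h.trans Sym2.eq_swap⟩⟩

theorem EdgeAdj.mono {S S' : Finset ι} (h : S ⊆ S') {a b : V} (hab : EdgeAdj ends S a b) :
    EdgeAdj ends S' a b :=
  let ⟨e, he, hab⟩ := hab; ⟨e, h he, hab⟩

theorem quot_mk_edgeAdj_eq_iff {S : Finset ι} {a b : V} :
    Quot.mk (EdgeAdj ends S) a = Quot.mk _ b ↔ ReflTransGen (EdgeAdj ends S) a b := by
  rw [← EqvGen.eqvGen_eq_reflTransGen]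
  exact ⟨Quot.eqvGen_exact, Quot.eqvGen_sound⟩

theorem reflTransGen_edgeAdj_insert [DecidableEq ι] {S : Finset ι} {e : ι} {u v : V}
    (he : ends e = s(u, v)) {a b : V} (h : ReflTransGen (EdgeAdj ends (insert e S)) a b) :
    ReflTransGen (EdgeAdj ends S) a b ∨
      ReflTransGen (EdgeAdj ends S) a u ∧ ReflTransGen (EdgeAdj ends S) v b ∨
      ReflTransGen (EdgeAdj ends S) a v ∧ ReflTransGen (EdgeAdj ends S) u b := by
  induction h with
  | refl => exact Or.inl .refl
  | tail _ hcd ih =>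
    obtain ⟨f, hf, hcd⟩ := hcd
    rcases mem_insert.1 hf with rfl | hf
    · rcases Sym2.eq_iff.1 (hcd.symm.trans he) with ⟨rfl, rfl⟩ | ⟨rfl, rfl⟩
      · rcases ih with h | ⟨h, -⟩ | ⟨h, -⟩
        exacts [Or.inr (Or.inl ⟨h, .refl⟩), Or.inr (Or.inl ⟨h, .refl⟩), Or.inl h]
      · rcases ih with h | ⟨h, -⟩ | ⟨h, -⟩
        exacts [Or.inr (Or.inr ⟨h, .refl⟩), Or.inl h, Or.inr (Or.inr ⟨h, .refl⟩)]
    · have hcd : EdgeAdj ends S _ _ := ⟨f, hf, hcd⟩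
      rcases ih with h | ⟨h, h'⟩ | ⟨h, h'⟩
      exacts [Or.inl (h.tail hcd), Or.inr (Or.inl ⟨h, h'.tail hcd⟩),
        Or.inr (Or.inr ⟨h, h'.tail hcd⟩)]

variable (ends) in
noncomputable def numComponents (S : Finset ι) : ℕ := Nat.card (Quot (EdgeAdj ends S))

-- Every edge lowers the number of components by at most one, and a set of edges is acyclic
-- exactly when each of its edges does lower it.
variable (ends) in
def IsForest [Fintype V] (S : Finset ι) : Prop :=
  numComponents ends S + S.card = Fintype.card V

variable [Fintype V]

theorem numComponents_le_of_forall_edgeAdj {S S' : Finset ι}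
    (h : ∀ a b, EdgeAdj ends S' a b → ReflTransGen (EdgeAdj ends S) a b) :
    numComponents ends S ≤ numComponents ends S' :=
  Nat.card_le_card_of_surjective
    (Quot.lift (Quot.mk _) fun a b hab => quot_mk_edgeAdj_eq_iff.2 (h a b hab))
    (Quot.ind fun a => ⟨Quot.mk _ a, rfl⟩)

theorem numComponents_empty : numComponents ends (∅ : Finset ι) = Fintype.card V := by
  rw [← Nat.card_eq_fintype_card]
  refine (Nat.card_eq_of_bijective (Quot.mk _) ⟨fun a b hab => ?_, Quot.exists_rep⟩).symm
  rcases (quot_mk_edgeAdj_eq_iff.1 hab).cases_head with h | ⟨c, ⟨e, he, -⟩, -⟩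
  exacts [h, absurd he (notMem_empty e)]

theorem isForest_empty : IsForest ends ∅ := by
  simp [IsForest, numComponents_empty]

theorem one_le_numComponents [Nonempty V] (S : Finset ι) : 1 ≤ numComponents ends S :=
  Nat.card_pos_iff.2 ⟨⟨Quot.mk _ (Classical.arbitrary V)⟩, inferInstance⟩

theorem IsForest.card_add_one_le [Nonempty V] {F : Finset ι} (hF : IsForest ends F) :
    F.card + 1 ≤ Fintype.card V := by
  have := one_le_numComponents (ends := ends) F
  unfold IsForest at hF
  omega

variable [DecidableEq ι]

theorem numComponents_le_insert (S : Finset ι) (e : ι) :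
    numComponents ends S ≤ numComponents ends (insert e S) + 1 := by
  classical
  induction he : ends e using Sym2.ind with | _ u v
  -- Adding `e = uv` merges at most the classes of `u` and `v`, so the induced map becomes
  -- injective once the class of `u` is sent to `none`.
  let g (x : Quot (EdgeAdj ends S)) : Option (Quot (EdgeAdj ends (insert e S))) :=
    if x = Quot.mk _ u then none else some (Quot.map id (fun _ _ h => h.mono (subset_insert e S)) x)
  have hg : g.Injective := by
    refine Quot.ind fun a => Quot.ind fun b hab => ?_
    by_cases ha : Quot.mk _ a = Quot.mk (EdgeAdj ends S) u <;>
      by_cases hb : Quot.mk _ b = Quot.mk (EdgeAdj ends S) u <;>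
      simp only [g, ha, hb, if_true, if_false, reduceCtorEq, Option.some_inj] at hab
    · exact ha.trans hb.symm
    · rw [quot_mk_edgeAdj_eq_iff] at ha hb ⊢
      rcases reflTransGen_edgeAdj_insert he (quot_mk_edgeAdj_eq_iff.1 hab) with
        h | ⟨h, -⟩ | ⟨-, h⟩
      exacts [h, absurd h ha, absurd (symm h) hb]
  simpa [numComponents] using Nat.card_le_card_of_injective g hg

theorem numComponents_insert_lt {S : Finset ι} {e : ι} {u v : V} (he : ends e = s(u, v))
    (huv : ¬ReflTransGen (EdgeAdj ends S) u v) :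
    numComponents ends (insert e S) < numComponents ends S := by
  let π : Quot (EdgeAdj ends S) → Quot (EdgeAdj ends (insert e S)) :=
    Quot.map id fun _ _ h => h.mono (subset_insert e S)
  have hπ : π.Surjective := Quot.ind fun a => ⟨Quot.mk _ a, rfl⟩
  refine (Nat.card_le_card_of_surjective π hπ).lt_of_ne fun h => huv ?_
  refine quot_mk_edgeAdj_eq_iff.1 ((hπ.bijective_of_nat_card_le h.ge).injective ?_)
  exact Quot.sound ⟨e, mem_insert_self e S, he⟩

theorem numComponents_le_union_add (S D : Finset ι) :
    numComponents ends S ≤ numComponents ends (S ∪ D) + D.card := by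
  induction D using Finset.induction with
  | empty => simp
  | insert e D heD ih =>
    rw [union_insert, card_insert_of_notMem heD]
    linarith [numComponents_le_insert (ends := ends) (S ∪ D) e]

theorem card_le_numComponents_add (S : Finset ι) :
    Fintype.card V ≤ numComponents ends S + S.card := by
  simpa [numComponents_empty] using numComponents_le_union_add (ends := ends) ∅ S

theorem IsForest.subset {F S : Finset ι} (hF : IsForest ends F) (hS : S ⊆ F) :
    IsForest ends S := by
  have := numComponents_le_union_add (ends := ends) S (F \ S)
  rw [union_sdiff_of_subset hS, card_sdiff_of_subset hS] at this
  have := card_le_numComponents_add (ends := ends) S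
  have := card_le_card hS
  unfold IsForest at *
  omega

theorem IsForest.exists_insert_of_card_lt {A B : Finset ι} (hA : IsForest ends A)
    (hB : IsForest ends B) (hAB : A.card < B.card) :
    ∃ e ∈ B, e ∉ A ∧ IsForest ends (insert e A) := by
  by_cases h : ∀ a b, EdgeAdj ends B a b → ReflTransGen (EdgeAdj ends A) a b
  · have := numComponents_le_of_forall_edgeAdj h
    unfold IsForest at hA hB
    omega
  push Not at h
  obtain ⟨u, v, ⟨e, heB, he⟩, huv⟩ := h
  have heA : e ∉ A := fun heA => huv (.single ⟨e, heA, he⟩)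
  have := numComponents_insert_lt he huv
  have := card_le_numComponents_add (ends := ends) (insert e A)
  refine ⟨e, heB, heA, ?_⟩
  unfold IsForest at *
  rw [card_insert_of_notMem heA] at *
  omega

variable (ends) in
noncomputable def graphicMatroid : Matroid ι :=
  (IndepMatroid.ofFinset Set.univ (IsForest ends) isForest_empty (fun _ _ hJ hIJ => hJ.subset hIJ)
    (fun _ _ => IsForest.exists_insert_of_card_lt) fun _ _ => Set.subset_univ _).matroid

@[simp]
theorem graphicMatroid_indep_coe {S : Finset ι} :
    (graphicMatroid ends).Indep S ↔ IsForest ends S := by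
  simp [graphicMatroid]

end EdgeFamily

section SpanningTree

variable {V : Type*} [Fintype V] {m : ℕ} {ends : Fin m → Sym2 V}

theorem isSpanningTree_iff_isForest {T : Finset (Fin m)} :
    IsSpanningTree ends T ↔ IsForest ends T ∧ T.card + 1 = Fintype.card V := by
  refine ⟨fun ⟨hcard, hconn⟩ => ⟨?_, hcard⟩, fun ⟨hT, hcard⟩ => ⟨hcard, fun u v => ?_⟩⟩
  · have : Nonempty V := Fintype.card_pos_iff.1 (by omega)
    have : numComponents ends T = 1 := Nat.card_eq_one_iff_unique.2
      ⟨⟨Quot.ind fun a => Quot.ind fun b => quot_mk_edgeAdj_eq_iff.2 (hconn a b)⟩,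
        ⟨Quot.mk _ (Classical.arbitrary V)⟩⟩
    unfold IsForest
    omega
  · have : numComponents ends T = 1 := by unfold IsForest at hT; omega
    exact quot_mk_edgeAdj_eq_iff.1 ((Nat.card_eq_one_iff_unique.1 this).1.elim _ _)

theorem IsSpanningTree.isBase_graphicMatroid {T : Finset (Fin m)} (hT : IsSpanningTree ends T) :
    (graphicMatroid ends).IsBase T := by
  obtain ⟨hforest, hcard⟩ := isSpanningTree_iff_isForest.1 hT
  have : Nonempty V := Fintype.card_pos_iff.1 (by omega)
  refine (graphicMatroid_indep_coe.2 hforest).isBase_of_maximal fun J hJ hTJ => ?_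
  obtain ⟨J, rfl⟩ := J.toFinite.exists_finset_coe
  have := (graphicMatroid_indep_coe.1 hJ).card_add_one_le
  exact congrArg _ (eq_of_subset_of_card_le (coe_subset.1 hTJ) (by omega))

theorem isSpanningTree_iff_isBase_graphicMatroid {T₀ T : Finset (Fin m)}
    (hT₀ : IsSpanningTree ends T₀) :
    IsSpanningTree ends T ↔ (graphicMatroid ends).IsBase T := by
  refine ⟨IsSpanningTree.isBase_graphicMatroid, fun hT => isSpanningTree_iff_isForest.2
    ⟨graphicMatroid_indep_coe.1 hT.indep, ?_⟩⟩
  have := hT.ncard_eq_ncard_of_isBase hT₀.isBase_graphicMatroid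
  rw [Set.ncard_coe_finset, Set.ncard_coe_finset] at this
  exact this ▸ hT₀.1

end SpanningTree

/-- If the quadratic cost matrix `Q` is row graded, and the lexicographically smallest
spanning tree `T⁰` is a minimum spanning tree for the linear costs `z i = ∑_{j ∈ T⁰} q i j`,
then `T⁰` minimizes the quadratic objective `z(T) = ∑_{i∈T} ∑_{j∈T} q i j` over all
spanning trees. -/
theorem qmst_row_graded_lex_optimal {V : Type*} [Fintype V] {m : ℕ}
    (ends : Fin m → Sym2 V) (Q : Fin m → Fin m → ℝ)
    (hgrad : ∀ i, Monotone (Q i))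
    (T0 : Finset (Fin m)) (hT0 : IsSpanningTree ends T0)
    (hlex : ∀ T, IsSpanningTree ends T → T = T0 ∨
      List.Lex (· < ·) (T0.sort (· ≤ ·)) (T.sort (· ≤ ·)))
    (hmst : ∀ T, IsSpanningTree ends T →
      ∑ i ∈ T0, ∑ j ∈ T0, Q i j ≤ ∑ i ∈ T, ∑ j ∈ T0, Q i j) :
    ∀ T, IsSpanningTree ends T →
      ∑ i ∈ T0, ∑ j ∈ T0, Q i j ≤ ∑ i ∈ T, ∑ j ∈ T, Q i j := by
  intro T hT
  have hbase : ∀ {S : Finset (Fin m)}, IsSpanningTree ends S ↔ (graphicMatroid ends).IsBase S :=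
    isSpanningTree_iff_isBase_graphicMatroid hT0
  have hcard : T.card = T0.card := by have := hT.1; have := hT0.1; omega
  have hgale := (hbase.1 hT0).orderEmbOfFin_le_of_lex_min (hbase.1 hT)
    (fun S hS => hlex S (hbase.2 hS)) rfl hcard
  calc ∑ i ∈ T0, ∑ j ∈ T0, Q i j ≤ ∑ i ∈ T, ∑ j ∈ T0, Q i j := hmst T hT
    _ ≤ ∑ i ∈ T, ∑ j ∈ T, Q i j := sum_le_sum fun i _ =>
      sum_le_sum_of_orderEmbOfFin_le rfl hcard fun k => hgrad i (hgale k)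
end

section
/- Let (E, F) be the base system of a matroid and W a doubly graded m×m cost matrix (rows and columns nondecreasing in the index order). Then the lexicographically smallest base S⁰ minimizes the quadratic objective Π(S) = Σ_{i∈S} Σ_{j∈S} w(i,j) over all bases S ∈ F, and Π(S⁰) equals the natural lower bound min_{S∈F} Σ_{j∈S} f_j where f_i = min_{S∈F} Σ_{j∈S} w(i,j). -/
/-!
Lexicographic minimality of `S⁰` rules out every exchange `S⁰ - j + c ∈ F` with `c < j`.
Together with the exchange axiom this shows, by the usual greedy argument, that `S⁰` minimises
`∑_{j ∈ S} g j` over `F` for every monotone `g`. Both the row sums `i ↦ ∑_{j ∈ S⁰} w(i,j)` and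
every row `w(i, ·)` are monotone, so
`Π(S⁰) ≤ ∑_{i ∈ S} ∑_{j ∈ S⁰} w(i,j) ≤ Π(S)`, and the inner minima in the lower bound are all
attained at `S⁰` as well.
-/

open Finset

theorem List.lex_lt_of_mem_of_notMem {α : Type*} [LinearOrder α] {c : α} {l₁ l₂ : List α}
    (h₁ : l₁.Pairwise (· < ·)) (h₂ : l₂.Pairwise (· < ·)) (hc₁ : c ∈ l₁) (hc₂ : c ∉ l₂)
    (hbelow : ∀ x < c, x ∈ l₁ ↔ x ∈ l₂) (hy : ∃ y ∈ l₂, c < y) :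
    List.Lex (· < ·) l₁ l₂ := by
  induction l₁ generalizing l₂ with
  | nil => simp at hc₁
  | cons a t₁ ih =>
    cases l₂ with
    | nil => simp at hy
    | cons b t₂ =>
      simp only [List.pairwise_cons, List.mem_cons] at h₁ h₂ hc₁ hc₂ hbelow hy
      rcases lt_trichotomy a b with hab | rfl | hba
      · exact .rel hab
      · have hac : a < c := by grind
        exact .cons (ih h₁.2 h₂.2 (by grind) (by grind) (fun x hx => by grind) (by grind))
      · grind

theorem Finset.lex_sort_insert_erase_of_lt {α : Type*} [LinearOrder α] {B : Finset α} {c d : α}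
    (hd : d ∈ B) (hc : c ∉ B) (hcd : c < d) :
    List.Lex (· < ·) ((insert c (B.erase d)).sort (· ≤ ·)) (B.sort (· ≤ ·)) := by
  refine List.lex_lt_of_mem_of_notMem (sortedLT_sort _).pairwise (sortedLT_sort _).pairwise
    ?_ ?_ (fun x hx => ?_) ⟨d, by simpa using hd, hcd⟩
  · simp
  · simpa using hc
  · simp only [mem_sort, mem_insert, mem_erase]
    grind

section Exchange

variable {α : Type*} [LinearOrder α] {F : Set (Finset α)} {B : Finset α}

def BaseExchange (F : Set (Finset α)) : Prop :=
  ∀ S₁ ∈ F, ∀ S₂ ∈ F, ∀ i ∈ S₁ \ S₂, ∃ j ∈ S₂ \ S₁, insert j (S₁.erase i) ∈ F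

theorem no_exchange_lt_of_lex_least
    (hlex : ∀ S ∈ F, S = B ∨ List.Lex (· < ·) (B.sort (· ≤ ·)) (S.sort (· ≤ ·)))
    {j c : α} (hj : j ∈ B) (hc : c ∉ B) (hcj : c < j) : insert c (B.erase j) ∉ F := by
  intro hmem
  have hne : insert c (B.erase j) ≠ B := fun h => hc (h ▸ mem_insert_self c _)
  exact (hlex _ hmem).elim hne
    ((List.Lex.asymm (· < ·)).asymm _ _ · (lex_sort_insert_erase_of_lt hj hc hcj))

variable {M : Type*} [AddCommMonoid M] [PartialOrder M] [IsOrderedAddMonoid M] {g : α → M}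

theorem BaseExchange.exists_exchange_sum_le
    (hex : BaseExchange F) (hB : B ∈ F)
    (hloc : ∀ j ∈ B, ∀ c ∉ B, c < j → insert c (B.erase j) ∉ F)
    (hg : Monotone g) {S : Finset α} (hS : S ∈ F) (hne : (S \ B).Nonempty) :
    ∃ S' ∈ F, #(S' \ B) < #(S \ B) ∧ ∑ k ∈ S', g k ≤ ∑ k ∈ S, g k := by
  set i := (S \ B).max' hne
  have hi : i ∈ S \ B := max'_mem _ hne
  obtain ⟨j, hj, hS'⟩ := hex S hS B hB i hi
  rw [mem_sdiff] at hi hj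
  -- otherwise `B - j + c` with `c ∈ S \ B`, so `c ≤ i < j`, would be a decreasing exchange
  have hji : j ≤ i := by
    by_contra! hij
    obtain ⟨c, hc, hB'⟩ := hex B hB S hS j (mem_sdiff.2 hj)
    exact hloc j hj.1 c (mem_sdiff.1 hc).2 ((le_max' _ c hc).trans_lt hij) hB'
  have hdiff : insert j (S.erase i) \ B = (S \ B).erase i := by
    ext x
    simp only [mem_sdiff, mem_insert, mem_erase]
    grind
  refine ⟨_, hS', ?_, ?_⟩
  · rw [hdiff]
    exact card_erase_lt_of_mem (mem_sdiff.2 hi)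
  · calc ∑ k ∈ insert j (S.erase i), g k = g j + ∑ k ∈ S.erase i, g k :=
          sum_insert fun h => hj.2 (mem_of_mem_erase h)
      _ ≤ g i + ∑ k ∈ S.erase i, g k := add_le_add_left (hg hji) _
      _ = ∑ k ∈ S, g k := add_sum_erase _ _ hi.1

theorem BaseExchange.eq_of_sdiff_eq_empty
    (hex : BaseExchange F) (hB : B ∈ F) {S : Finset α} (hS : S ∈ F) (h : S \ B = ∅) : S = B := by
  refine (sdiff_eq_empty_iff_subset.1 h).antisymm fun i hiB => ?_
  by_contra hiS
  obtain ⟨j, hj, -⟩ := hex B hB S hS i (mem_sdiff.2 ⟨hiB, hiS⟩)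
  simp [h] at hj

theorem BaseExchange.isLeast_sum_of_no_exchange_lt
    (hex : BaseExchange F) (hB : B ∈ F)
    (hloc : ∀ j ∈ B, ∀ c ∉ B, c < j → insert c (B.erase j) ∉ F)
    (hg : Monotone g) :
    IsLeast {x | ∃ S ∈ F, x = ∑ k ∈ S, g k} (∑ k ∈ B, g k) := by
  refine ⟨⟨B, hB, rfl⟩, ?_⟩
  rintro _ ⟨S, hS, rfl⟩
  induction hn : #(S \ B) using Nat.strong_induction_on generalizing S with
  | _ n ih =>
    obtain hempty | hne := (S \ B).eq_empty_or_nonempty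
    · rw [hex.eq_of_sdiff_eq_empty hB hS hempty]
    · obtain ⟨S', hS', hlt, hle⟩ := hex.exists_exchange_sum_le hB hloc hg hS hne
      exact (ih _ (hn ▸ hlt) S' hS' rfl).trans hle

end Exchange

theorem matroid_doubly_graded_lex_base_optimal_general (m : ℕ)
    (F : Set (Finset (Fin m)))
    (hex : ∀ S₁ ∈ F, ∀ S₂ ∈ F, ∀ i ∈ S₁ \ S₂, ∃ j ∈ S₂ \ S₁, insert j (S₁.erase i) ∈ F)
    (W : Fin m → Fin m → ℝ)
    (hrow : ∀ i, Monotone (W i))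
    (hcol : ∀ j, Monotone (fun i => W i j))
    (S0 : Finset (Fin m)) (hS0 : S0 ∈ F)
    (hlex : ∀ S ∈ F, S = S0 ∨
      List.Lex (· < ·) (S0.sort (· ≤ ·)) (S.sort (· ≤ ·))) :
    (∀ S ∈ F, ∑ i ∈ S0, ∑ j ∈ S0, W i j ≤ ∑ i ∈ S, ∑ j ∈ S, W i j) ∧
    ∑ i ∈ S0, ∑ j ∈ S0, W i j =
      sInf {x : ℝ | ∃ S ∈ F, x = ∑ j ∈ S, sInf {y : ℝ | ∃ S' ∈ F, y = ∑ k ∈ S', W j k}} := by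
  have hleast {g : Fin m → ℝ} (hg : Monotone g) :
      IsLeast {x | ∃ S ∈ F, x = ∑ k ∈ S, g k} (∑ k ∈ S0, g k) :=
    BaseExchange.isLeast_sum_of_no_exchange_lt hex hS0
      (fun _ hj _ hc hcj => no_exchange_lt_of_lex_least hlex hj hc hcj) hg
  have hrowSum : Monotone fun i => ∑ j ∈ S0, W i j :=
    fun _ _ hab => sum_le_sum fun j _ => hcol j hab
  have hinner (i : Fin m) : sInf {y : ℝ | ∃ S' ∈ F, y = ∑ k ∈ S', W i k} = ∑ k ∈ S0, W i k :=
    (hleast (hrow i)).csInf_eq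
  refine ⟨fun S hS => ?_, ?_⟩
  · calc ∑ i ∈ S0, ∑ j ∈ S0, W i j ≤ ∑ i ∈ S, ∑ j ∈ S0, W i j := (hleast hrowSum).2 ⟨S, hS, rfl⟩
      _ ≤ ∑ i ∈ S, ∑ j ∈ S, W i j := sum_le_sum fun i _ => (hleast (hrow i)).2 ⟨S, hS, rfl⟩
  · simp only [hinner]
    exact (hleast hrowSum).csInf_eq.symm

/-- If `(E, F)` is the base system of a matroid (nonempty family of equal-cardinality bases
with the exchange property) and `W` is doubly graded, then the lexicographically smallest
base `S⁰` minimizes the quadratic objective `Π(S) = ∑_{i∈S} ∑_{j∈S} w i j`, and `Π(S⁰)`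
equals the natural lower bound `min_S ∑_{j∈S} f j` with `f i = min_S ∑_{j∈S} w i j`. -/
theorem matroid_doubly_graded_lex_base_optimal (m s : ℕ)
    (F : Set (Finset (Fin m))) (hne : F.Nonempty)
    (hcard : ∀ S ∈ F, S.card = s)
    (hex : ∀ S₁ ∈ F, ∀ S₂ ∈ F, ∀ i ∈ S₁ \ S₂, ∃ j ∈ S₂ \ S₁, insert j (S₁.erase i) ∈ F)
    (W : Fin m → Fin m → ℝ)
    (hrow : ∀ i, Monotone (W i))
    (hcol : ∀ j, Monotone (fun i => W i j))
    (S0 : Finset (Fin m)) (hS0 : S0 ∈ F)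
    (hlex : ∀ S ∈ F, S = S0 ∨
      List.Lex (· < ·) (S0.sort (· ≤ ·)) (S.sort (· ≤ ·))) :
    (∀ S ∈ F, ∑ i ∈ S0, ∑ j ∈ S0, W i j ≤ ∑ i ∈ S, ∑ j ∈ S, W i j) ∧
    ∑ i ∈ S0, ∑ j ∈ S0, W i j =
      sInf {x : ℝ | ∃ S ∈ F, x = ∑ j ∈ S, sInf {y : ℝ | ∃ S' ∈ F, y = ∑ k ∈ S', W j k}} :=
  matroid_doubly_graded_lex_base_optimal_general m F hex W hrow hcol S0 hS0 hlex
end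

section
/- Let (E, F) be a base system (all bases of equal cardinality) that is not a matroid, i.e., there exist bases S₁, S₂ and K ∈ S₁∖S₂ such that S₁∖{K} ∪ {i} is not a base for every i ∈ S₂∖S₁. Then there exists a permutation π of E and a permuted doubly graded 0-1 cost matrix W such that the π-critical (lexicographically smallest under π) base is not optimal for the quadratic minimum weight base problem with cost matrix W. -/
/-!
Order `E` so that `S₁ \ {K}` comes first, then `S₂ \ S₁`, then `K`, then everything else, and let
`W i j` be `0` when both `i` and `j` lie in the initial segment `(S₁ \ {K}) ∪ (S₂ \ S₁)` and `1`
otherwise; since that segment is a lower set, `W` is doubly graded in this order. The base `S₂`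
lies in the segment and costs `0`, while `S₁ ∋ K` costs at least `1`. The critical base is `S₁`:
a base lexicographically smaller than `S₁` must contain the leading block `S₁ \ {K}`, so it is
`S₁ \ {K} ∪ {i}` with `i` ordered before `K`, i.e. `i ∈ S₂ \ S₁`, which the failure of the
exchange property forbids.
-/

open Finset

theorem List.exists_mem_notMem_forall_lt_of_lex {α : Type*} [LinearOrder α] {l₀ l₁ : List α}
    (h : List.Lex (· < ·) l₀ l₁) (h₀ : l₀.Pairwise (· < ·)) (h₁ : l₁.Pairwise (· < ·))
    (hlen : l₀.length = l₁.length) :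
    ∃ d ∈ l₀, d ∉ l₁ ∧ ∀ e ∈ l₁, e ∉ l₀ → d < e := by
  induction h with
  | nil => simp at hlen
  | @cons a l₀ l₁ _ ih =>
    rw [List.pairwise_cons] at h₀ h₁
    obtain ⟨d, hd₀, hd₁, hmin⟩ := ih h₀.2 h₁.2 (by simpa using hlen)
    have had : a < d := h₀.1 d hd₀
    refine ⟨d, List.mem_cons_of_mem _ hd₀, ?_, fun e he hne => ?_⟩
    · rw [List.mem_cons, not_or]
      exact ⟨had.ne', hd₁⟩
    · rcases List.mem_cons.mp he with rfl | he
      · exact absurd List.mem_cons_self hne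
      · exact hmin e he (hne ∘ List.mem_cons_of_mem _)
  | @rel a l₀ b l₁ hab =>
    rw [List.pairwise_cons] at h₁
    refine ⟨a, List.mem_cons_self, ?_, fun e he _ => ?_⟩
    · rw [List.mem_cons, not_or]
      exact ⟨hab.ne, fun ha => lt_asymm hab (h₁.1 a ha)⟩
    · rcases List.mem_cons.mp he with rfl | he
      exacts [hab, hab.trans (h₁.1 e he)]

theorem Finset.exists_mem_sdiff_forall_lt_of_lex_sort {α : Type*} [LinearOrder α]
    {s t : Finset α} (hcard : s.card = t.card)
    (h : List.Lex (· < ·) (s.sort (· ≤ ·)) (t.sort (· ≤ ·))) :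
    ∃ d ∈ s \ t, ∀ e ∈ t \ s, d < e := by
  obtain ⟨d, hds, hdt, hmin⟩ := List.exists_mem_notMem_forall_lt_of_lex h
    (sortedLT_sort s).pairwise (sortedLT_sort t).pairwise (by simp [hcard])
  simp only [mem_sort] at hds hdt hmin
  exact ⟨d, mem_sdiff.mpr ⟨hds, hdt⟩, fun e he => hmin e (mem_sdiff.mp he).1 (mem_sdiff.mp he).2⟩

theorem Finset.exists_mem_sdiff_forall_lt_of_lex_sort_image {α β : Type*} [DecidableEq α]
    [LinearOrder β] {f : α → β} (hf : Function.Injective f) {s t : Finset α}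
    (hcard : s.card = t.card)
    (h : List.Lex (· < ·) ((s.image f).sort (· ≤ ·)) ((t.image f).sort (· ≤ ·))) :
    ∃ d ∈ s \ t, ∀ e ∈ t \ s, f d < f e := by
  obtain ⟨d', hd', hmin⟩ := exists_mem_sdiff_forall_lt_of_lex_sort
    (by rw [card_image_of_injective _ hf, card_image_of_injective _ hf, hcard]) h
  rw [mem_sdiff, mem_image] at hd'
  obtain ⟨⟨d, hds, rfl⟩, hdt⟩ := hd'
  refine ⟨d, mem_sdiff.mpr ⟨hds, fun hd => hdt (mem_image_of_mem f hd)⟩, fun e he => ?_⟩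
  rw [mem_sdiff] at he
  exact hmin (f e) (mem_sdiff.mpr ⟨mem_image_of_mem f he.1, by simpa [hf.eq_iff] using he.2⟩)

theorem Finset.eq_insert_erase_of_forall_lt {α β : Type*} [DecidableEq α] [LinearOrder β]
    {f : α → β} {S₀ S₁ : Finset α} {K d : α} (hcard : S₀.card = S₁.card) (hK : K ∈ S₁)
    (hd : d ∈ S₀ \ S₁) (hmin : ∀ e ∈ S₁ \ S₀, f d < f e)
    (hfirst : ∀ a ∈ S₁.erase K, ∀ x ∉ S₁.erase K, f a < f x) :
    S₀ = insert d (S₁.erase K) ∧ f d < f K := by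
  rw [mem_sdiff] at hd
  have hdA : d ∉ S₁.erase K := fun h => hd.2 (mem_of_mem_erase h)
  have hsub : insert d (S₁.erase K) ⊆ S₀ := by
    refine insert_subset hd.1 fun a ha => ?_
    by_contra haS₀
    exact lt_asymm (hmin a (mem_sdiff.mpr ⟨mem_of_mem_erase ha, haS₀⟩)) (hfirst a ha d hdA)
  have hS₀ : S₀ = insert d (S₁.erase K) := by
    refine (eq_of_subset_of_card_le hsub ?_).symm
    rw [card_insert_of_notMem hdA, card_erase_of_mem hK, hcard]
    have := card_pos.mpr ⟨K, hK⟩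
    omega
  refine ⟨hS₀, hmin K (mem_sdiff.mpr ⟨hK, ?_⟩)⟩
  rw [hS₀, mem_insert, not_or]
  exact ⟨fun h => hd.2 (h ▸ hK), notMem_erase K S₁⟩

theorem Tuple.sort_symm_lt_sort_symm_of_lt {n : ℕ} {α : Type*} [LinearOrder α] {f : Fin n → α}
    {x y : Fin n} (h : f x < f y) : (sort f).symm x < (sort f).symm y :=
  (monotone_sort f).reflect_lt (by simpa using h)

theorem Tuple.le_of_sort_symm_le {n : ℕ} {α : Type*} [LinearOrder α] {f : Fin n → α}
    {x y : Fin n} (h : (sort f).symm x ≤ (sort f).symm y) : f x ≤ f y := by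
  simpa using monotone_sort f h

section OffBlockWeight

open Classical in
noncomputable def offBlockWeight {α : Type*} (P : Set α) (i j : α) : ℝ :=
  if i ∈ P ∧ j ∈ P then 0 else 1

variable {α : Type*} (P : Set α)

theorem offBlockWeight_eq_zero_or_eq_one (i j : α) :
    offBlockWeight P i j = 0 ∨ offBlockWeight P i j = 1 := by
  unfold offBlockWeight
  split_ifs <;> simp

theorem offBlockWeight_nonneg (i j : α) : 0 ≤ offBlockWeight P i j := by
  rcases offBlockWeight_eq_zero_or_eq_one P i j with h | h <;> simp [h]

variable {P}

theorem offBlockWeight_monotone_right [Preorder α] (hP : IsLowerSet P) (i : α) :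
    Monotone (offBlockWeight P i) := by
  intro j j' hj
  unfold offBlockWeight
  split_ifs with h h' h' <;> first | simp | exact absurd ⟨h'.1, hP hj h'.2⟩ h

theorem offBlockWeight_monotone_left [Preorder α] (hP : IsLowerSet P) (j : α) :
    Monotone (fun i => offBlockWeight P i j) := by
  intro i i' hi
  simp only [offBlockWeight]
  split_ifs with h h' h' <;> first | simp | exact absurd ⟨hP hi h'.1, h'.2⟩ h

theorem sum_sum_offBlockWeight_eq_zero {S : Finset α} (hS : ↑S ⊆ P) :
    ∑ i ∈ S, ∑ j ∈ S, offBlockWeight P i j = 0 :=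
  sum_eq_zero fun _ hi => sum_eq_zero fun _ hj => if_pos ⟨hS hi, hS hj⟩

theorem one_le_sum_sum_offBlockWeight {S : Finset α} {x : α} (hx : x ∈ S) (hxP : x ∉ P) :
    1 ≤ ∑ i ∈ S, ∑ j ∈ S, offBlockWeight P i j :=
  calc 1 = offBlockWeight P x x := (if_neg fun h => hxP h.1).symm
    _ ≤ ∑ j ∈ S, offBlockWeight P x j :=
      single_le_sum (fun j _ => offBlockWeight_nonneg P x j) hx
    _ ≤ ∑ i ∈ S, ∑ j ∈ S, offBlockWeight P i j :=
      single_le_sum (fun i _ => sum_nonneg fun j _ => offBlockWeight_nonneg P i j) hx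

end OffBlockWeight

section ExchangeRank

variable {α : Type*} [DecidableEq α] (A B : Finset α) (K : α)

def exchangeRank (x : α) : ℕ :=
  if x ∈ A then 0 else if x ∈ B then 1 else if x = K then 2 else 3

variable {A B K}

theorem exchangeRank_eq_zero_iff {x : α} : exchangeRank A B K x = 0 ↔ x ∈ A := by
  unfold exchangeRank; split_ifs <;> simp_all

theorem exchangeRank_le_one_iff {x : α} : exchangeRank A B K x ≤ 1 ↔ x ∈ A ∨ x ∈ B := by
  unfold exchangeRank; split_ifs <;> simp_all

theorem exchangeRank_le_two_iff {x : α} :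
    exchangeRank A B K x ≤ 2 ↔ x ∈ A ∨ x ∈ B ∨ x = K := by
  unfold exchangeRank; split_ifs <;> simp_all

theorem exchangeRank_erase_sdiff_le_one {S₁ S₂ : Finset α} {x : α} (hK : K ∉ S₂) (hx : x ∈ S₂) :
    exchangeRank (S₁.erase K) (S₂ \ S₁) K x ≤ 1 := by
  rw [exchangeRank_le_one_iff, mem_erase, mem_sdiff]
  by_cases hx₁ : x ∈ S₁
  · exact Or.inl ⟨fun h => hK (h ▸ hx), hx₁⟩
  · exact Or.inr ⟨hx, hx₁⟩

theorem exchangeRank_self (hA : K ∉ A) (hB : K ∉ B) : exchangeRank A B K K = 2 := by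
  simp [exchangeRank, hA, hB]

end ExchangeRank

/-- If a base system `(E, F)` (all bases of equal cardinality) fails the matroid base
exchange property — witnessed by bases `S₁, S₂` and `K ∈ S₁ \ S₂` with
`S₁ \ {K} ∪ {i} ∉ F` for all `i ∈ S₂ \ S₁` — then there is a permutation `π` of `E` and a
0-1 cost matrix `W` that is permuted doubly graded via `π`, such that the `π`-critical
(lexicographically smallest under `π`) base is not optimal for the quadratic minimum
weight base problem with cost matrix `W`. -/
theorem non_matroid_has_bad_permuted_doubly_graded_instance (m s : ℕ)
    (F : Set (Finset (Fin m)))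
    (hcard : ∀ S ∈ F, S.card = s)
    (S₁ S₂ : Finset (Fin m)) (h₁ : S₁ ∈ F) (h₂ : S₂ ∈ F)
    (K : Fin m) (hK : K ∈ S₁ \ S₂)
    (hfail : ∀ i ∈ S₂ \ S₁, insert i (S₁.erase K) ∉ F) :
    ∃ (π : Equiv.Perm (Fin m)) (W : Fin m → Fin m → ℝ),
      (∀ i j, W i j = 0 ∨ W i j = 1) ∧
      (∀ i, Monotone (fun j => W (π.symm i) (π.symm j))) ∧
      (∀ j, Monotone (fun i => W (π.symm i) (π.symm j))) ∧
      ∀ S0 ∈ F,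
        (∀ S ∈ F, S = S0 ∨
          List.Lex (· < ·) ((S0.image π).sort (· ≤ ·)) ((S.image π).sort (· ≤ ·))) →
        ∃ S ∈ F, ∑ i ∈ S, ∑ j ∈ S, W i j < ∑ i ∈ S0, ∑ j ∈ S0, W i j := by
  obtain ⟨hK₁, hK₂⟩ := mem_sdiff.mp hK
  set r := exchangeRank (S₁.erase K) (S₂ \ S₁) K
  set π := (Tuple.sort r).symm
  set P : Set (Fin m) := {x | r x ≤ 1}
  have hP : IsLowerSet (π.symm ⁻¹' P) := (isLowerSet_Iic 1).preimage (Tuple.monotone_sort r)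
  have hrK : r K = 2 := exchangeRank_self (notMem_erase K S₁) fun h => hK₂ (mem_sdiff.mp h).1
  refine ⟨π, offBlockWeight P, offBlockWeight_eq_zero_or_eq_one P,
    fun i => offBlockWeight_monotone_right hP i, fun j => offBlockWeight_monotone_left hP j,
    fun S₀ hS₀ hcrit => ?_⟩
  have hS₀₁ : S₀ = S₁ := by
    refine ((hcrit S₁ h₁).resolve_right fun hlex => ?_).symm
    have hcard₀₁ : S₀.card = S₁.card := (hcard S₀ hS₀).trans (hcard S₁ h₁).symm
    obtain ⟨d, hd, hmin⟩ := exists_mem_sdiff_forall_lt_of_lex_sort_image π.injective hcard₀₁ hlex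
    have hfirst : ∀ a ∈ S₁.erase K, ∀ x ∉ S₁.erase K, π a < π x := fun a ha x hx =>
      Tuple.sort_symm_lt_sort_symm_of_lt <| (exchangeRank_eq_zero_iff.mpr ha).trans_lt <|
        Nat.pos_of_ne_zero (mt exchangeRank_eq_zero_iff.mp hx)
    obtain ⟨rfl, hdK⟩ := eq_insert_erase_of_forall_lt hcard₀₁ hK₁ hd hmin hfirst
    have hdS₁ : d ∉ S₁ := (mem_sdiff.mp hd).2
    have hrd : r d ≤ 2 := hrK ▸ Tuple.le_of_sort_symm_le hdK.le
    rcases exchangeRank_le_two_iff.mp hrd with hdA | hdB | rfl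
    · exact hdS₁ (mem_of_mem_erase hdA)
    · exact hfail d hdB hS₀
    · exact hdS₁ hK₁
  have hS₂P : ↑S₂ ⊆ P := fun _ => exchangeRank_erase_sdiff_le_one hK₂
  refine ⟨S₂, h₂, ?_⟩
  rw [sum_sum_offBlockWeight_eq_zero hS₂P, hS₀₁]
  exact zero_lt_one.trans_le (one_le_sum_sum_offBlockWeight hK₁ (by simp [P, hrK]))
end

section
/- An independence system (E, I) derived from a base system (E, F) is a matroid if and only if for every doubly graded cost matrix (after applying a suitable permutation π making rows and columns nondecreasing), the π-critical base is an optimal solution of the quadratic minimum weight base problem. -/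
/-!
Order the ground set by `π`. If the bases satisfy the exchange axiom, no single exchange can
lower the `π`-critical base `S₀` in the lexicographic order, and an exchange argument shows that
for every threshold `t` no base has more elements `≤ t` than `S₀`. Hence the `k`-th smallest
element of `S₀` lies below the `k`-th smallest element of any base `S`, and monotonicity of `W`
in both indices compares the two quadratic costs term by term.

Conversely, given `S₁`, `S₂` and `i ∈ S₁ \ S₂`, order the elements of `S₁ - i` first, then those
of `S₂ \ S₁`, then the rest. The critical base is optimal for the doubly graded costs
`W x y = c x + c y`, where `c` is the indicator of the last one or the last two blocks; this forces
it to contain `S₁ - i` and to lie inside `(S₁ - i) ∪ (S₂ \ S₁)`, so it is `S₁ - i + j` with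
`j ∈ S₂ \ S₁`.
-/

open Finset

variable {α β : Type*}

def IsBaseExchange [DecidableEq α] (F : Set (Finset α)) : Prop :=
  ∀ S₁ ∈ F, ∀ S₂ ∈ F, ∀ i ∈ S₁ \ S₂, ∃ j ∈ S₂ \ S₁, insert j (S₁.erase i) ∈ F

theorem IsBaseExchange.image [DecidableEq α] [DecidableEq β] {F : Set (Finset α)}
    (hF : IsBaseExchange F) {f : α → β} (hf : f.Injective) :
    IsBaseExchange (Finset.image f '' F) := by
  rintro _ ⟨S₁, hS₁, rfl⟩ _ ⟨S₂, hS₂, rfl⟩ _ hi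
  obtain ⟨⟨i, hi₁, rfl⟩, hi₂⟩ : (∃ i ∈ S₁, f i = _) ∧ _ := by simpa using hi
  obtain ⟨j, hj, hjF⟩ := hF S₁ hS₁ S₂ hS₂ i (mem_sdiff.2 ⟨hi₁, fun h => hi₂ _ h rfl⟩)
  refine ⟨f j, by simpa [hf.mem_finset_image] using hj, _, hjF, ?_⟩
  rw [image_insert, image_erase hf]

theorem isBaseExchange_of_exists_card_filter_le [DecidableEq α] {F : Set (Finset α)} {s : ℕ}
    (hcard : ∀ S ∈ F, #S = s)
    (h : ∀ r : α → ℕ, ∃ S₀ ∈ F, ∀ k, ∀ S ∈ F, #{x ∈ S₀ | k ≤ r x} ≤ #{x ∈ S | k ≤ r x}) :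
    IsBaseExchange F := by
  intro S₁ hS₁ S₂ hS₂ i hi
  obtain ⟨hi₁, hi₂⟩ := mem_sdiff.1 hi
  set K := S₁.erase i
  set D := S₂ \ S₁
  set r : α → ℕ := fun x => if x ∈ K then 0 else if x ∈ D then 1 else 2
  have hr₁ (S : Finset α) : {x ∈ S | 1 ≤ r x} = S \ K := by
    ext x; simp only [r, mem_filter, mem_sdiff]; split_ifs <;> simp_all
  have hr₂ (S : Finset α) : {x ∈ S | 2 ≤ r x} = S \ (K ∪ D) := by
    ext x; simp only [r, mem_filter, mem_sdiff, mem_union]; split_ifs <;> simp_all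
  obtain ⟨S₀, hS₀, hopt⟩ := h r
  have hS₀K : #(S₀ \ K) ≤ 1 := by
    have hS₁K : S₁ \ K = {i} := sdiff_erase_self hi₁
    simpa only [hr₁, hS₁K, card_singleton] using hopt 1 S₁ hS₁
  have hS₀KD : S₀ ⊆ K ∪ D := by
    have hS₂KD : S₂ \ (K ∪ D) = ∅ := by grind
    simpa only [hr₂, hS₂KD, card_empty, nonpos_iff_eq_zero, card_eq_zero,
      sdiff_eq_empty_iff_subset] using hopt 2 S₂ hS₂
  have hs := hcard S₀ hS₀
  have hs₁ : 0 < s := hcard S₁ hS₁ ▸ card_pos.2 ⟨i, hi₁⟩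
  have hKcard : #K = s - 1 := by rw [card_erase_of_mem hi₁, hcard S₁ hS₁]
  have hK : K ⊆ S₀ := by
    have := card_sdiff_add_card_inter S₀ K
    have : S₀ ∩ K = K := eq_of_subset_of_card_le inter_subset_right (by omega)
    exact this ▸ inter_subset_left
  obtain ⟨j, hj⟩ := card_eq_one.1 (show #(S₀ \ K) = 1 by rw [card_sdiff_of_subset hK]; omega)
  have hjS₀ : j ∈ S₀ \ K := hj ▸ mem_singleton_self j
  refine ⟨j, by grind, ?_⟩
  rwa [insert_eq, ← hj, union_comm, union_sdiff_of_subset hK]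

theorem sum_le_sum_of_sum_sum_add_le {S₀ S : Finset α} (hcard : #S₀ = #S) (c : α → ℝ)
    (h : ∑ x ∈ S₀, ∑ y ∈ S₀, (c x + c y) ≤ ∑ x ∈ S, ∑ y ∈ S, (c x + c y)) :
    ∑ x ∈ S₀, c x ≤ ∑ x ∈ S, c x := by
  have expand (U : Finset α) : ∑ x ∈ U, ∑ y ∈ U, (c x + c y) = 2 * #U * ∑ x ∈ U, c x := by
    simp only [sum_add_distrib, sum_const, nsmul_eq_mul, ← mul_sum]
    ring
  rcases (#S).eq_zero_or_pos with h0 | hpos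
  · simp [card_eq_zero.1 h0, card_eq_zero.1 (hcard.trans h0)]
  · rw [expand, expand, hcard] at h
    exact le_of_mul_le_mul_left h (by positivity)

section LinearOrder

variable [LinearOrder β]

theorem Finset.sort_insert_erase_lt_sort {A : Finset β} {a b : β} (ha : a ∈ A) (hb : b ∉ A)
    (hba : b < a) : (insert b (A.erase a)).sort (· ≤ ·) < A.sort (· ≤ ·) := by
  induction A using Finset.induction_on_min generalizing a with
  | empty => simp at ha
  | insert c A hc ih =>
    have hcA : c ∉ A := fun h => lt_irrefl c (hc c h)
    rw [sort_insert _ (fun x hx => (hc x hx).le) hcA]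
    rcases lt_or_gt_of_ne (show b ≠ c by grind) with hbc | hcb
    · rw [sort_insert _ (fun x hx => ?_) (by simp [hb])]
      · exact .rel hbc
      · have : x ∈ insert c A := mem_of_mem_erase hx
        grind
    · have hac : a ≠ c := (hcb.trans hba).ne'
      rw [erase_insert_of_ne hac.symm, insert_comm, sort_insert _ (fun x hx => ?_) (by grind)]
      · exact .cons (ih (by grind) (by grind) hba)
      · grind

/-- The order on `List β` is lexicographic. The `π`-critical base `S₀` of a family `F` is the one
with `IsLexMin (Finset.image π '' F) (S₀.image π)`. -/
def IsLexMin (F : Set (Finset β)) (S₀ : Finset β) : Prop :=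
  ∀ S ∈ F, S₀.sort (· ≤ ·) ≤ S.sort (· ≤ ·)

theorem isLexMin_image_iff [DecidableEq α] {f : α → β} (hf : f.Injective)
    {F : Set (Finset α)} {S₀ : Finset α} :
    IsLexMin (Finset.image f '' F) (S₀.image f) ↔
      ∀ S ∈ F, S = S₀ ∨
        List.Lex (· < ·) ((S₀.image f).sort (· ≤ ·)) ((S.image f).sort (· ≤ ·)) := by
  have hsort {A B : Finset β} (h : A.sort (· ≤ ·) = B.sort (· ≤ ·)) : A = B := by
    simpa using congrArg List.toFinset h
  refine Set.forall_mem_image.trans (forall₂_congr fun S _ => ?_)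
  refine le_iff_eq_or_lt.trans (or_congr_left ⟨fun h => ?_, fun h => h ▸ rfl⟩)
  exact (Finset.image_injective hf (hsort h)).symm

theorem IsLexMin.lt_of_insert_erase_mem {F : Set (Finset β)} {S₀ : Finset β}
    (hmin : IsLexMin F S₀) {a b : β} (ha : a ∈ S₀) (hb : b ∉ S₀)
    (hF : insert b (S₀.erase a) ∈ F) : a < b :=
  (lt_or_gt_of_ne fun h : a = b => hb (h ▸ ha)).resolve_right fun hba =>
    (hmin _ hF).not_gt (sort_insert_erase_lt_sort ha hb hba)

theorem IsBaseExchange.card_filter_le_of_isLexMin {F : Set (Finset β)} (hF : IsBaseExchange F)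
    {s : ℕ} (hcard : ∀ S ∈ F, #S = s) {S₀ : Finset β} (hS₀ : S₀ ∈ F) (hmin : IsLexMin F S₀)
    (t : β) {S : Finset β} (hS : S ∈ F) : #{x ∈ S | x ≤ t} ≤ #{x ∈ S₀ | x ≤ t} := by
  induction hn : #(S \ S₀) using Nat.strong_induction_on generalizing S with
  | _ n ih =>
  by_cases hout : ∃ i ∈ S \ S₀, t < i
  · obtain ⟨i, hi, hti⟩ := hout
    obtain ⟨j, hj, hS'⟩ := hF S hS S₀ hS₀ i hi
    have hcloser : #(insert j (S.erase i) \ S₀) < n := by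
      rw [insert_sdiff_of_mem _ (mem_sdiff.1 hj).1, erase_sdiff_comm, ← hn]
      exact card_erase_lt_of_mem hi
    calc #{x ∈ S | x ≤ t} ≤ #{x ∈ insert j (S.erase i) | x ≤ t} :=
          card_le_card fun x hx => by grind
      _ ≤ #{x ∈ S₀ | x ≤ t} := ih _ hcloser hS' rfl
  · push Not at hout
    have hsub : {x ∈ S₀ | ¬x ≤ t} ⊆ {x ∈ S | ¬x ≤ t} := by
      intro x hx
      rw [mem_filter, not_le] at hx ⊢
      refine ⟨by_contra fun hxS => ?_, hx.2⟩
      obtain ⟨j, hj, hjF⟩ := hF S₀ hS₀ S hS x (mem_sdiff.2 ⟨hx.1, hxS⟩)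
      have hxj := hmin.lt_of_insert_erase_mem hx.1 (mem_sdiff.1 hj).2 hjF
      exact (hxj.trans_le (hout j (by grind))).not_gt hx.2
    have := card_le_card hsub
    have := card_filter_add_card_filter_not (s := S) (p := (· ≤ t))
    have := card_filter_add_card_filter_not (s := S₀) (p := (· ≤ t))
    have := hcard S hS
    have := hcard S₀ hS₀
    omega

theorem Finset.orderEmbOfFin_le_of_card_filter_le {A B : Finset β} {k : ℕ} (hA : #A = k)
    (hB : #B = k) (hAB : ∀ t, #{x ∈ B | x ≤ t} ≤ #{x ∈ A | x ≤ t}) (i : Fin k) :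
    A.orderEmbOfFin hA i ≤ B.orderEmbOfFin hB i := by
  set a := A.orderEmbOfFin hA
  set b := B.orderEmbOfFin hB
  by_contra! hlt
  have hBi : (Iic i).image b ⊆ {x ∈ B | x ≤ b i} := by
    simp only [subset_iff, mem_image, mem_Iic, mem_filter]
    rintro _ ⟨j, hj, rfl⟩
    exact ⟨orderEmbOfFin_mem B hB j, b.monotone hj⟩
  have hAi : {x ∈ A | x ≤ b i} ⊆ (Iio i).image a := by
    intro x hx
    rw [mem_filter] at hx
    obtain ⟨j, rfl⟩ : x ∈ Set.range a := by rw [range_orderEmbOfFin]; exact hx.1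
    exact mem_image_of_mem a (mem_Iio.2 (a.lt_iff_lt.1 (hx.2.trans_lt hlt)))
  have h₁ := card_le_card hBi
  have h₂ := (card_le_card hAi).trans card_image_le
  rw [card_image_of_injective _ b.injective, Fin.card_Iic] at h₁
  rw [Fin.card_Iio] at h₂
  have := hAB (b i)
  omega

theorem sum_sum_le_sum_sum_of_card_filter_le {A B : Finset β} (hcard : #A = #B)
    (g : β → β → ℝ) (hrow : ∀ u, Monotone (g u)) (hcol : ∀ v, Monotone (g · v))
    (hAB : ∀ t, #{x ∈ B | x ≤ t} ≤ #{x ∈ A | x ≤ t}) :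
    ∑ u ∈ A, ∑ v ∈ A, g u v ≤ ∑ u ∈ B, ∑ v ∈ B, g u v := by
  have hle := orderEmbOfFin_le_of_card_filter_le hcard rfl hAB
  rw [← map_orderEmbOfFin_univ B rfl, ← map_orderEmbOfFin_univ A hcard]
  simp only [sum_map]
  gcongr with i _ j _
  exact (hrow _ (hle j)).trans (hcol _ (hle i))

theorem IsBaseExchange.sum_sum_le_of_isLexMin {F : Set (Finset β)} (hF : IsBaseExchange F)
    {s : ℕ} (hcard : ∀ S ∈ F, #S = s) {S₀ : Finset β} (hS₀ : S₀ ∈ F) (hmin : IsLexMin F S₀)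
    (g : β → β → ℝ) (hrow : ∀ u, Monotone (g u)) (hcol : ∀ v, Monotone (g · v))
    {S : Finset β} (hS : S ∈ F) : ∑ u ∈ S₀, ∑ v ∈ S₀, g u v ≤ ∑ u ∈ S, ∑ v ∈ S, g u v :=
  sum_sum_le_sum_sum_of_card_filter_le ((hcard S₀ hS₀).trans (hcard S hS).symm) g hrow hcol
    fun t => hF.card_filter_le_of_isLexMin hcard hS₀ hmin t hS

end LinearOrder

/-- A base system `(E, F)` (nonempty family of equal-cardinality bases) gives a matroid
(i.e., satisfies the base exchange property) if and only if for every cost matrix that is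
permuted doubly graded via a permutation `π`, the `π`-critical (lexicographically smallest
under `π`) base is an optimal solution of the quadratic minimum weight base problem. -/
theorem matroid_iff_permuted_doubly_graded_lex_optimal (m s : ℕ)
    (F : Set (Finset (Fin m))) (hne : F.Nonempty)
    (hcard : ∀ S ∈ F, S.card = s) :
    (∀ S₁ ∈ F, ∀ S₂ ∈ F, ∀ i ∈ S₁ \ S₂, ∃ j ∈ S₂ \ S₁, insert j (S₁.erase i) ∈ F) ↔
    (∀ (W : Fin m → Fin m → ℝ) (π : Equiv.Perm (Fin m)),
      (∀ i, Monotone (fun j => W (π.symm i) (π.symm j))) →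
      (∀ j, Monotone (fun i => W (π.symm i) (π.symm j))) →
      ∀ S0 ∈ F,
        (∀ S ∈ F, S = S0 ∨
          List.Lex (· < ·) ((S0.image π).sort (· ≤ ·)) ((S.image π).sort (· ≤ ·))) →
        ∀ S ∈ F, ∑ i ∈ S0, ∑ j ∈ S0, W i j ≤ ∑ i ∈ S, ∑ j ∈ S, W i j) := by
  refine ⟨fun (hex : IsBaseExchange F) W π hrow hcol S₀ hS₀ hlex S hS => ?_, fun hopt => ?_⟩
  · have hcardπ : ∀ S ∈ Finset.image π '' F, #S = s := by
      rintro _ ⟨S, hS, rfl⟩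
      rw [card_image_of_injective _ π.injective, hcard S hS]
    simpa [sum_image π.injective.injOn] using (hex.image π.injective).sum_sum_le_of_isLexMin
      hcardπ (Set.mem_image_of_mem _ hS₀) ((isLexMin_image_iff π.injective).2 hlex)
      (fun u v => W (π.symm u) (π.symm v)) hrow hcol (Set.mem_image_of_mem _ hS)
  · refine isBaseExchange_of_exists_card_filter_le hcard fun r => ?_
    obtain ⟨π, hπ⟩ : ∃ π : Equiv.Perm (Fin m), Monotone (r ∘ π.symm) :=
      ⟨(Tuple.sort r).symm, by simpa using Tuple.monotone_sort r⟩
    obtain ⟨_, ⟨S₀, hS₀, rfl⟩, hmin⟩ :=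
      (Finset.image π '' F).exists_min_image (·.sort (· ≤ ·)) (Set.toFinite _) (hne.image _)
    refine ⟨S₀, hS₀, fun k S hS => ?_⟩
    set c : Fin m → ℝ := fun x => if k ≤ r x then 1 else 0
    have hc : Monotone (c ∘ π.symm) := fun x y hxy => by
      have := hπ hxy
      simp only [Function.comp_apply, c] at this ⊢
      split_ifs <;> grind
    have := sum_le_sum_of_sum_sum_add_le (by rw [hcard S₀ hS₀, hcard S hS]) c
      (hopt _ π (fun _ => hc.const_add _) (fun _ => hc.add_const _) S₀ hS₀
        ((isLexMin_image_iff π.injective).1 hmin) S hS)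
    simpa [c, sum_boole] using this
end

section
/- If (E, F) are the bases of a matroid, W is a doubly graded matrix, and S⁰ is the lexicographically smallest base, then S⁰ minimizes the bottleneck quadratic objective max_{i,j ∈ S} w(i,j) over all bases S ∈ F. -/
/-!
For a doubly graded `W` the bottleneck value of a nonempty set `S` is attained at
`W (max S) (max S)`, so it suffices that `S⁰` has the smallest maximum among all bases.
If some base `S` had `max S < i := max S⁰`, exchanging `i` out of `S⁰` against some
`j ∈ S \ S⁰` gives a base whose sorted list agrees with that of `S⁰` below `j < i` and
then contains `j`, which is absent from `S⁰`: it is lexicographically smaller than `S⁰`.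
-/

theorem List.lex_lt_of_pairwise_lt {α : Type*} [LinearOrder α] {l₁ l₂ : List α} {j y : α}
    (h₁ : l₁.Pairwise (· < ·)) (h₂ : l₂.Pairwise (· < ·))
    (hj₁ : j ∈ l₁) (hj₂ : j ∉ l₂) (hy : y ∈ l₂) (hjy : j < y)
    (hbelow : ∀ x < j, x ∈ l₁ ↔ x ∈ l₂) :
    List.Lex (· < ·) l₁ l₂ := by
  induction l₁ generalizing l₂ with
  | nil => simp at hj₁
  | cons a t₁ ih =>
    cases l₂ with
    | nil => simp at hy
    | cons b t₂ =>
      simp only [List.pairwise_cons, List.mem_cons] at *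
      rcases lt_trichotomy a b with hab | rfl | hba
      · exact .rel hab
      · refine .cons (ih h₁.2 h₂.2 ?_ ?_ ?_ ?_) <;> grind
      · -- `b < a ≤ j` would put `b` in `l₁`, below its head `a`
        grind

namespace Finset

variable {α : Type*} [LinearOrder α]

theorem lex_sort_insert_erase_lt {S : Finset α} {i j : α} (hi : i ∈ S) (hj : j ∉ S)
    (hji : j < i) :
    List.Lex (· < ·) ((insert j (S.erase i)).sort (· ≤ ·)) (S.sort (· ≤ ·)) := by
  refine List.lex_lt_of_pairwise_lt (sortedLT_sort _).pairwise (sortedLT_sort _).pairwise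
    (j := j) (y := i) (by simp) (by simpa) (by simpa) hji ?_
  intro x hx
  simp only [mem_sort, mem_insert, mem_erase]
  grind

theorem nonempty_of_exchange {F : Set (Finset α)}
    (hex : ∀ S₁ ∈ F, ∀ S₂ ∈ F, ∀ i ∈ S₁ \ S₂, ∃ j ∈ S₂ \ S₁, insert j (S₁.erase i) ∈ F)
    {S₁ S₂ : Finset α} (h₁ : S₁ ∈ F) (h₂ : S₂ ∈ F) (hne : S₁.Nonempty) : S₂.Nonempty := by
  rw [nonempty_iff_ne_empty]
  rintro rfl
  obtain ⟨i, hi⟩ := hne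
  obtain ⟨j, hj, -⟩ := hex S₁ h₁ ∅ h₂ i (by simpa)
  simp at hj

theorem max'_le_max'_of_lex_least {F : Set (Finset α)}
    (hex : ∀ S₁ ∈ F, ∀ S₂ ∈ F, ∀ i ∈ S₁ \ S₂, ∃ j ∈ S₂ \ S₁, insert j (S₁.erase i) ∈ F)
    {S₀ : Finset α} (hS₀ : S₀ ∈ F)
    (hlex : ∀ S ∈ F, S = S₀ ∨ List.Lex (· < ·) (S₀.sort (· ≤ ·)) (S.sort (· ≤ ·)))
    {S : Finset α} (hS : S ∈ F) (h₀ : S₀.Nonempty) (h : S.Nonempty) :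
    S₀.max' h₀ ≤ S.max' h := by
  by_contra! hlt
  set i := S₀.max' h₀
  have hiS : i ∉ S := fun hiS => (S.le_max' i hiS).not_gt hlt
  obtain ⟨j, hj, hS'⟩ := hex S₀ hS₀ S hS i (mem_sdiff.2 ⟨S₀.max'_mem h₀, hiS⟩)
  have hji : j < i := (S.le_max' j (mem_sdiff.1 hj).1).trans_lt hlt
  have hlt' := lex_sort_insert_erase_lt (S₀.max'_mem h₀) (mem_sdiff.1 hj).2 hji
  rcases hlex _ hS' with heq | hgt
  · exact (mem_sdiff.1 hj).2 (heq ▸ mem_insert_self j _)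
  · exact asymm hgt hlt'

end Finset

theorem sSup_doublyMonotone_eq {α : Type*} [LinearOrder α] {W : α → α → ℝ}
    (hrow : ∀ i, Monotone (W i)) (hcol : ∀ j, Monotone (fun i => W i j))
    {S : Finset α} (h : S.Nonempty) :
    sSup {x : ℝ | ∃ i ∈ S, ∃ j ∈ S, x = W i j} = W (S.max' h) (S.max' h) := by
  refine IsGreatest.csSup_eq ⟨⟨_, S.max'_mem h, _, S.max'_mem h, rfl⟩, ?_⟩
  rintro _ ⟨i, hi, j, hj, rfl⟩
  exact (hrow i (S.le_max' j hj)).trans (hcol _ (S.le_max' i hi))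

theorem matroid_doubly_graded_lex_base_bottleneck_optimal_general (m : ℕ)
    (F : Set (Finset (Fin m)))
    (hex : ∀ S₁ ∈ F, ∀ S₂ ∈ F, ∀ i ∈ S₁ \ S₂, ∃ j ∈ S₂ \ S₁, insert j (S₁.erase i) ∈ F)
    (W : Fin m → Fin m → ℝ)
    (hrow : ∀ i, Monotone (W i))
    (hcol : ∀ j, Monotone (fun i => W i j))
    (S0 : Finset (Fin m)) (hS0 : S0 ∈ F)
    (hlex : ∀ S ∈ F, S = S0 ∨
      List.Lex (· < ·) (S0.sort (· ≤ ·)) (S.sort (· ≤ ·))) :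
    ∀ S ∈ F,
      sSup {x : ℝ | ∃ i ∈ S0, ∃ j ∈ S0, x = W i j} ≤
      sSup {x : ℝ | ∃ i ∈ S, ∃ j ∈ S, x = W i j} := by
  intro S hS
  rcases S.eq_empty_or_nonempty with rfl | hne
  · have hS0_empty : S0 = ∅ := Finset.not_nonempty_iff_eq_empty.1 fun h0 => by
      simpa using Finset.nonempty_of_exchange hex hS0 hS h0
    rw [hS0_empty]
  have hne₀ := Finset.nonempty_of_exchange hex hS hS0 hne
  have hmax := Finset.max'_le_max'_of_lex_least hex hS0 hlex hS hne₀ hne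
  rw [sSup_doublyMonotone_eq hrow hcol hne₀, sSup_doublyMonotone_eq hrow hcol hne]
  exact (hrow _ hmax).trans (hcol _ hmax)

/-- If `(E, F)` are the bases of a matroid and `W` is doubly graded, then the
lexicographically smallest base `S⁰` minimizes the bottleneck quadratic objective
`max_{i,j ∈ S} w i j` over all bases. -/
theorem matroid_doubly_graded_lex_base_bottleneck_optimal (m s : ℕ)
    (F : Set (Finset (Fin m))) (hne : F.Nonempty)
    (hcard : ∀ S ∈ F, S.card = s)
    (hex : ∀ S₁ ∈ F, ∀ S₂ ∈ F, ∀ i ∈ S₁ \ S₂, ∃ j ∈ S₂ \ S₁, insert j (S₁.erase i) ∈ F)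
    (W : Fin m → Fin m → ℝ)
    (hrow : ∀ i, Monotone (W i))
    (hcol : ∀ j, Monotone (fun i => W i j))
    (S0 : Finset (Fin m)) (hS0 : S0 ∈ F)
    (hlex : ∀ S ∈ F, S = S0 ∨
      List.Lex (· < ·) (S0.sort (· ≤ ·)) (S.sort (· ≤ ·))) :
    ∀ S ∈ F,
      sSup {x : ℝ | ∃ i ∈ S0, ∃ j ∈ S0, x = W i j} ≤
      sSup {x : ℝ | ∃ i ∈ S, ∃ j ∈ S, x = W i j} :=
  matroid_doubly_graded_lex_base_bottleneck_optimal_general m F hex W hrow hcol S0 hS0 hlex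
end
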